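/- arXiv:2210.02171 — 4 statements merged into one kernel-verified Lean document; each statement's English description precedes it below -/
import Mathlib

section
/- Let H be an RKHS with kernel k on X, and let P, Q be Borel probability measures with mean embeddings μ_P ≠ μ_Q in H. Let d = ‖μ_P − μ_Q‖_H and h⁺ = (μ_P − μ_Q)/d. For ε > 0, let A_ε = {h ∈ H : ‖h‖_H ≤ 1 and ∫h dP − ∫h dQ ≥ d − ε}. Then every h_ε ∈ A_ε satisfies ‖h_ε − h⁺‖_H² ≤ 2ε/d. In particular, any sequence h_m ∈ A_{1/m} converges to h⁺ in H. -/
open MeasureTheory Filter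
open scoped RealInnerProductSpace

/-! Since `∫ h dP − ∫ h dQ = ⟪h, μ_P − μ_Q⟫`, the hypothesis says that `h` nearly attains the
Cauchy–Schwarz bound `⟪h, μ_P − μ_Q⟫ ≤ d` on the unit ball. For a unit vector `u` and `‖h‖ ≤ 1`,
expanding the square gives `‖h − u‖² ≤ 2 (1 − ⟪h, u⟫)`, which with `u = h⁺` is at most `2ε/d`. -/

section InnerProduct

variable {E : Type*} [NormedAddCommGroup E] [InnerProductSpace ℝ E]

theorem norm_sub_sq_le_two_mul_one_sub_inner {h u : E} (hh : ‖h‖ ≤ 1) (hu : ‖u‖ = 1) :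
    ‖h - u‖ ^ 2 ≤ 2 * (1 - ⟪h, u⟫) := by
  rw [norm_sub_sq_real, hu]
  nlinarith [norm_nonneg h]

theorem norm_sub_inv_norm_smul_sq_le {h v : E} {ε : ℝ} (hv : v ≠ 0) (hh : ‖h‖ ≤ 1)
    (hgap : ‖v‖ - ε ≤ ⟪h, v⟫) : ‖h - ‖v‖⁻¹ • v‖ ^ 2 ≤ 2 * ε / ‖v‖ := by
  have hpos : 0 < ‖v‖ := norm_pos_iff.2 hv
  calc ‖h - ‖v‖⁻¹ • v‖ ^ 2 ≤ 2 * (1 - ⟪h, ‖v‖⁻¹ • v⟫) :=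
        norm_sub_sq_le_two_mul_one_sub_inner hh (norm_smul_inv_norm hv)
    _ = 2 * (‖v‖ - ⟪h, v⟫) / ‖v‖ := by
        rw [real_inner_smul_right]
        field_simp
    _ ≤ 2 * ε / ‖v‖ := by gcongr; linarith

end InnerProduct

theorem tendsto_of_norm_sub_sq_le {ι E : Type*} [SeminormedAddCommGroup E] {l : Filter ι}
    {f : ι → E} {a : E} {g : ι → ℝ} (hg : Tendsto g l (nhds 0))
    (hfg : ∀ i, ‖f i - a‖ ^ 2 ≤ g i) : Tendsto f l (nhds a) := by
  rw [tendsto_iff_norm_sub_tendsto_zero]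
  have hsqrt : Tendsto (fun i => √(g i)) l (nhds 0) := by
    simpa using hg.sqrt
  exact squeeze_zero (fun _ => norm_nonneg _) (fun i => Real.le_sqrt_of_sq_le (hfg i)) hsqrt

theorem near_maximizers_converge_general {X H : Type*} [MeasurableSpace X]
    [NormedAddCommGroup H] [InnerProductSpace ℝ H]
    (K : X → H) (P Q : Measure X)
    (μP μQ : H)
    (hP : ∀ f : H, ∫ x, ⟪f, K x⟫ ∂P = ⟪f, μP⟫)
    (hQ : ∀ f : H, ∫ x, ⟪f, K x⟫ ∂Q = ⟪f, μQ⟫)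
    (hne : μP ≠ μQ) :
    (∀ ε > (0 : ℝ), ∀ h : H, ‖h‖ ≤ 1 →
      ‖μP - μQ‖ - ε ≤ (∫ x, ⟪h, K x⟫ ∂P) - (∫ x, ⟪h, K x⟫ ∂Q) →
      ‖h - ‖μP - μQ‖⁻¹ • (μP - μQ)‖ ^ 2 ≤ 2 * ε / ‖μP - μQ‖) ∧
    (∀ hs : ℕ → H,
      (∀ m : ℕ, ‖hs m‖ ≤ 1 ∧
        ‖μP - μQ‖ - 1 / (m + 1 : ℝ) ≤ (∫ x, ⟪hs m, K x⟫ ∂P) - ∫ x, ⟪hs m, K x⟫ ∂Q) →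
      Tendsto hs atTop (nhds (‖μP - μQ‖⁻¹ • (μP - μQ)))) := by
  have near : ∀ (ε : ℝ) (h : H), ‖h‖ ≤ 1 →
      ‖μP - μQ‖ - ε ≤ (∫ x, ⟪h, K x⟫ ∂P) - (∫ x, ⟪h, K x⟫ ∂Q) →
      ‖h - ‖μP - μQ‖⁻¹ • (μP - μQ)‖ ^ 2 ≤ 2 * ε / ‖μP - μQ‖ := by
    intro ε h hh hgap
    rw [hP, hQ, ← inner_sub_right] at hgap
    exact norm_sub_inv_norm_smul_sq_le (sub_ne_zero.2 hne) hh hgap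
  refine ⟨fun ε _ => near ε, fun hs hm => ?_⟩
  refine tendsto_of_norm_sub_sq_le ?_ fun m => near _ _ (hm m).1 (hm m).2
  simpa using (tendsto_one_div_add_atTop_nhds_zero_nat.const_mul 2).div_const ‖μP - μQ‖

/-- with mean embeddings `μ_P ≠ μ_Q`, `d = ‖μ_P − μ_Q‖` and witness
`h⁺ = (μ_P − μ_Q)/d`, every `h` in the unit ball with `∫h dP − ∫h dQ ≥ d − ε` satisfies
`‖h − h⁺‖² ≤ 2ε/d`; in particular any sequence `h_m ∈ A_{1/m}` converges to `h⁺` in the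
RKHS.  (Feature-map model: `f(x) = ⟪f, K x⟫`.) -/
theorem near_maximizers_converge {X H : Type*} [MeasurableSpace X]
    [NormedAddCommGroup H] [InnerProductSpace ℝ H]
    (K : X → H) (P Q : Measure X) [IsProbabilityMeasure P] [IsProbabilityMeasure Q]
    (μP μQ : H)
    (hP : ∀ f : H, ∫ x, ⟪f, K x⟫ ∂P = ⟪f, μP⟫)
    (hQ : ∀ f : H, ∫ x, ⟪f, K x⟫ ∂Q = ⟪f, μQ⟫)
    (hne : μP ≠ μQ) :
    (∀ ε > (0 : ℝ), ∀ h : H, ‖h‖ ≤ 1 →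
      ‖μP - μQ‖ - ε ≤ (∫ x, ⟪h, K x⟫ ∂P) - (∫ x, ⟪h, K x⟫ ∂Q) →
      ‖h - ‖μP - μQ‖⁻¹ • (μP - μQ)‖ ^ 2 ≤ 2 * ε / ‖μP - μQ‖) ∧
    (∀ hs : ℕ → H,
      (∀ m : ℕ, ‖hs m‖ ≤ 1 ∧
        ‖μP - μQ‖ - 1 / (m + 1 : ℝ) ≤ (∫ x, ⟪hs m, K x⟫ ∂P) - ∫ x, ⟪hs m, K x⟫ ∂Q) →
      Tendsto hs atTop (nhds (‖μP - μQ‖⁻¹ • (μP - μQ)))) :=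
  near_maximizers_converge_general K P Q μP μQ hP hQ hne
end

section
/- Let H be a Hilbert space, F its closed unit ball, and define σ : (bounded functionals on F) → ℝ by σ(g) = sup_{f∈F} g(f) for bounded real-valued functions g on F. Let φ ∈ H* be represented by a nonzero vector v ∈ H (so φ(f) = ⟨f, v⟩). Then σ, restricted to elements of ℓ^∞(F) of the form induced by continuous linear functionals, is Hadamard differentiable at φ tangentially to functionals continuous on (F, norm topology), with derivative σ'_φ(g) = g(v/‖v‖). Concretely: for any g : F → ℝ continuous with respect to the norm topology on F and any sequences t_m ↓ 0, g_m → g uniformly on F, one has (σ(φ + t_m g_m) − σ(φ))/t_m → g(v/‖v‖). -/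
open Filter Set Topology
open scoped RealInnerProductSpace

/-!
The linear functional `f ↦ ⟪f, v⟫` attains its maximum `‖v‖` over the unit ball only at
`u = v / ‖v‖`, and this maximum is well separated: `⟪f, v⟫ ≤ ‖v‖ - ‖v‖ ‖f - u‖² / 2`.
For a perturbation `φ + t h` with `h` uniformly close to a function continuous at `u`, the
supremum is therefore at least `φ u + t h u`, while points far from `u` lose a fixed amount
`η` that a small `t h` cannot make up, and points near `u` gain at most `t (h u + ε)`.
-/

section SeparatedMaximum

variable {X : Type*} {φ h : X → ℝ} {u : X}

lemma bddAbove_range_add_mul {t K : ℝ} (hmax : ∀ x, φ x ≤ φ u) (hK : ∀ x, h x ≤ K)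
    (ht : 0 ≤ t) : BddAbove (range fun x => φ x + t * h x) :=
  ⟨φ u + t * K, by
    rintro _ ⟨x, rfl⟩
    exact add_le_add (hmax x) (mul_le_mul_of_nonneg_left (hK x) ht)⟩

lemma iSup_add_mul_le [Nonempty X] {U : Set X} {η t c K : ℝ} (hmax : ∀ x, φ x ≤ φ u)
    (hsep : ∀ x ∉ U, φ x + η ≤ φ u) (hU : ∀ x ∈ U, h x ≤ c) (hK : ∀ x, h x ≤ K)
    (ht : 0 ≤ t) (htK : t * (K - c) ≤ η) :
    ⨆ x, (φ x + t * h x) ≤ φ u + t * c := by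
  refine ciSup_le fun x => ?_
  by_cases hx : x ∈ U
  · exact add_le_add (hmax x) (mul_le_mul_of_nonneg_left (hU x hx) ht)
  · nlinarith [hsep x hx, mul_le_mul_of_nonneg_left (hK x) ht]

end SeparatedMaximum

lemma TendstoUniformly.eventually_lt_add {ι X : Type*} {l : Filter ι} {gs : ι → X → ℝ}
    {g : X → ℝ} (hunif : TendstoUniformly gs g l) {ε : ℝ} (hε : 0 < ε) :
    ∀ᶠ i in l, ∀ x, gs i x < g x + ε :=
  (Metric.tendstoUniformly_iff.mp hunif ε hε).mono fun _ hi x => by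
    linarith [(abs_lt.mp (Real.dist_eq _ _ ▸ hi x)).1]

theorem tendsto_iSup_add_mul_sub_iSup_div {ι X : Type*} [TopologicalSpace X] {l : Filter ι}
    {φ g : X → ℝ} {u : X} (hmax : ∀ x, φ x ≤ φ u)
    (hsep : ∀ U ∈ 𝓝 u, ∃ η > 0, ∀ x ∉ U, φ x + η ≤ φ u)
    (hg : ContinuousAt g u) (hgb : BddAbove (range g))
    {t : ι → ℝ} (htpos : ∀ i, 0 < t i) (ht : Tendsto t l (𝓝 0))
    {gs : ι → X → ℝ} (hunif : TendstoUniformly gs g l) :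
    Tendsto (fun i => ((⨆ x, φ x + t i * gs i x) - ⨆ x, φ x) / t i) l (𝓝 (g u)) := by
  have : Nonempty X := ⟨u⟩
  obtain ⟨K, hK⟩ := hgb
  have hbound : ∀ᶠ i in l, ∀ x, gs i x ≤ K + 1 :=
    (hunif.eventually_lt_add one_pos).mono fun i hi x =>
      (hi x).le.trans (by linarith [hK (mem_range_self x)])
  rw [ciSup_eq_of_forall_le_of_forall_lt_exists_gt hmax fun _ hw => ⟨u, hw⟩]
  refine tendsto_order.2 ⟨fun a ha => ?_, fun b hb => ?_⟩
  · filter_upwards [hbound, (hunif.tendsto_at u).eventually (eventually_gt_nhds ha)]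
      with i hi hai
    have hu := le_ciSup (bddAbove_range_add_mul hmax hi (htpos i).le) u
    rw [lt_div_iff₀ (htpos i)]
    nlinarith [htpos i]
  · obtain ⟨c, hc, hcb⟩ := exists_between hb
    set ε := (c - g u) / 2
    have hε : 0 < ε := by simp only [ε]; linarith
    have hcε : g u + ε + ε = c := by simp only [ε]; ring
    obtain ⟨η, hη, hsepU⟩ :=
      hsep _ (hg.preimage_mem_nhds (Iio_mem_nhds (lt_add_of_pos_right (g u) hε)))
    have htK : Tendsto (fun i => t i * (K + 1 - c)) l (𝓝 0) := by
      simpa using ht.mul_const (K + 1 - c)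
    filter_upwards [hbound, hunif.eventually_lt_add hε, htK.eventually (eventually_lt_nhds hη)]
      with i hi hiε hiη
    have hsup := iSup_add_mul_le hmax hsepU
      (fun x hx => by linarith [hiε x, show g x < g u + ε from hx]) hi (htpos i).le hiη.le
    rw [div_lt_iff₀ (htpos i)]
    nlinarith [htpos i]

section InnerProduct

variable {H : Type*} [NormedAddCommGroup H] [InnerProductSpace ℝ H]

lemma real_inner_add_mul_norm_sub_sq_le {f : H} (hf : ‖f‖ ≤ 1) (v : H) :
    ⟪f, v⟫ + ‖v‖ / 2 * ‖f - ‖v‖⁻¹ • v‖ ^ 2 ≤ ‖v‖ := by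
  rcases eq_or_ne v 0 with rfl | hv
  · simp
  have hvpos : 0 < ‖v‖ := norm_pos_iff.mpr hv
  have hfv : ⟪f, ‖v‖⁻¹ • v⟫ = ‖v‖⁻¹ * ⟪f, v⟫ := real_inner_smul_right _ _ _
  have hnorm : ‖‖v‖⁻¹ • v‖ = 1 := norm_smul_inv_norm hv
  rw [norm_sub_sq_real, hfv, hnorm]
  have hf2 : ‖f‖ ^ 2 ≤ 1 := by nlinarith [norm_nonneg f]
  field_simp
  nlinarith [mul_le_mul_of_nonneg_left hf2 hvpos.le]

lemma real_inner_inv_norm_smul_self (v : H) : ⟪‖v‖⁻¹ • v, v⟫ = ‖v‖ := by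
  rcases eq_or_ne v 0 with rfl | hv
  · simp
  rw [real_inner_smul_left, real_inner_self_eq_norm_sq]
  field_simp [norm_ne_zero_iff.mpr hv]

end InnerProduct

theorem sup_hadamard_differentiable_general {H : Type*}
    [NormedAddCommGroup H] [InnerProductSpace ℝ H]
    (v : H) (hv : v ≠ 0) (hmem : ‖(‖v‖⁻¹ • v : H)‖ ≤ 1)
    (g : {f : H // ‖f‖ ≤ 1} → ℝ) (hgc : Continuous g) (hgb : ∃ M : ℝ, ∀ f, |g f| ≤ M)
    (t : ℕ → ℝ) (htpos : ∀ m, 0 < t m) (ht0 : Tendsto t atTop (nhds 0))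
    (gs : ℕ → {f : H // ‖f‖ ≤ 1} → ℝ)
    (hunif : TendstoUniformly gs g atTop) :
    Tendsto
      (fun m =>
        ((⨆ f : {f : H // ‖f‖ ≤ 1}, (⟪f.1, v⟫ + t m * gs m f)) -
          ⨆ f : {f : H // ‖f‖ ≤ 1}, ⟪f.1, v⟫) / t m)
      atTop (nhds (g ⟨‖v‖⁻¹ • v, hmem⟩)) := by
  set u : {f : H // ‖f‖ ≤ 1} := ⟨‖v‖⁻¹ • v, hmem⟩
  have hgap (f : {f : H // ‖f‖ ≤ 1}) :
      ⟪f.1, v⟫ + ‖v‖ / 2 * dist f u ^ 2 ≤ ⟪u.1, v⟫ := by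
    rw [real_inner_inv_norm_smul_self, Subtype.dist_eq, dist_eq_norm]
    exact real_inner_add_mul_norm_sub_sq_le f.2 v
  have hmax (f : {f : H // ‖f‖ ≤ 1}) : ⟪f.1, v⟫ ≤ ⟪u.1, v⟫ := by
    nlinarith [hgap f, norm_nonneg v]
  have hsep (U) (hU : U ∈ 𝓝 u) : ∃ η > 0, ∀ f ∉ U, ⟪f.1, v⟫ + η ≤ ⟪u.1, v⟫ := by
    obtain ⟨δ, hδ, hball⟩ := Metric.mem_nhds_iff.mp hU
    refine ⟨‖v‖ / 2 * δ ^ 2, by positivity, fun f hf => ?_⟩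
    have hδf : δ ≤ dist f u := not_lt.mp fun h => hf (hball h)
    nlinarith [hgap f, norm_nonneg v, mul_self_le_mul_self hδ.le hδf]
  obtain ⟨M, hM⟩ := hgb
  exact tendsto_iSup_add_mul_sub_iSup_div hmax hsep hgc.continuousAt
    ⟨M, by rintro _ ⟨f, rfl⟩; exact (le_abs_self _).trans (hM f)⟩ htpos ht0 hunif

/-- Hadamard differentiability (in the sequential sense) of the supremum
functional `σ(g) = sup_{f ∈ F} g(f)` over the closed unit ball `F` of a Hilbert space, at
the bounded functional `φ(f) = ⟪f, v⟫` (`v ≠ 0`), tangentially to norm-continuous bounded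
functionals, with derivative `σ'_φ(g) = g(v/‖v‖)`: for any positive null sequence `t_m`
and any bounded `g_m → g` uniformly on `F` with `g` norm-continuous and bounded,
`(σ(φ + t_m g_m) − σ(φ))/t_m → g(v/‖v‖)`. -/
theorem sup_hadamard_differentiable {H : Type*}
    [NormedAddCommGroup H] [InnerProductSpace ℝ H]
    (v : H) (hv : v ≠ 0) (hmem : ‖(‖v‖⁻¹ • v : H)‖ ≤ 1)
    (g : {f : H // ‖f‖ ≤ 1} → ℝ) (hgc : Continuous g) (hgb : ∃ M : ℝ, ∀ f, |g f| ≤ M)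
    (t : ℕ → ℝ) (htpos : ∀ m, 0 < t m) (ht0 : Tendsto t atTop (nhds 0))
    (gs : ℕ → {f : H // ‖f‖ ≤ 1} → ℝ) (hgsb : ∀ m, ∃ M : ℝ, ∀ f, |gs m f| ≤ M)
    (hunif : TendstoUniformly gs g atTop) :
    Tendsto
      (fun m =>
        ((⨆ f : {f : H // ‖f‖ ≤ 1}, (⟪f.1, v⟫ + t m * gs m f)) -
          ⨆ f : {f : H // ‖f‖ ≤ 1}, ⟪f.1, v⟫) / t m)
      atTop (nhds (g ⟨‖v‖⁻¹ • v, hmem⟩)) :=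
  sup_hadamard_differentiable_general v hv hmem g hgc hgb t htpos ht0 gs hunif
end

section
/- Let H be a real Hilbert space with closed unit ball F and let v ∈ H be nonzero with φ(f) = ⟨f, v⟩. For ε > 0 set A_ε = {h ∈ F : ⟨h, v⟩ ≥ ‖v‖ − ε}. Then lim_{ε↓0} sup_{h ∈ A_ε} g(h) = g(v/‖v‖) for every function g : F → ℝ that is continuous with respect to the norm topology. -/
/-!
Every near-maximizer `h ∈ A_ε` of `⟪·, v⟫` on the unit ball is close to `u = v / ‖v‖`:
expanding the square gives `‖h - u‖² ≤ 2ε / ‖v‖`. So the sets `A_ε` shrink to `u` while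
containing it, and their images under `g`, continuous at `u`, shrink to `g u` while containing
it; the suprema of such sets of reals converge to `g u`.
-/

open Filter Topology
open scoped RealInnerProductSpace

theorem tendsto_csSup_of_tendsto_smallSets {ι : Type*} {l : Filter ι} {T : ι → Set ℝ}
    {a : ℝ} (hT : Tendsto T l (𝓝 a).smallSets) (ha : ∀ᶠ i in l, a ∈ T i) :
    Tendsto (fun i => sSup (T i)) l (𝓝 a) := by
  refine tendsto_order.2 ⟨fun b hb => ?_, fun b hb => ?_⟩
  · filter_upwards [tendsto_smallSets_iff.1 hT _ (Iio_mem_nhds (lt_add_one a)), ha]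
      with i hTi hai
    exact hb.trans_le (le_csSup ⟨a + 1, fun x hx => (hTi hx).le⟩ hai)
  · obtain ⟨c, hac, hcb⟩ := exists_between hb
    filter_upwards [tendsto_smallSets_iff.1 hT _ (Iio_mem_nhds hac), ha] with i hTi hai
    exact (csSup_le ⟨a, hai⟩ fun x hx => (hTi hx).le).trans_lt hcb

theorem Subtype.tendsto_smallSets_nhds {X ι : Type*} [TopologicalSpace X] {p : X → Prop}
    {l : Filter ι} {S : ι → Set (Subtype p)} {x : Subtype p}
    (h : Tendsto (fun i => Subtype.val '' S i) l (𝓝 x.1).smallSets) :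
    Tendsto S l (𝓝 x).smallSets := by
  rw [nhds_induced, smallSets_comap_eq_comap_image]
  exact tendsto_comap_iff.2 h

section InnerProductSpace

variable {H : Type*} [NormedAddCommGroup H] [InnerProductSpace ℝ H]

theorem norm_sub_sq_le_of_one_sub_le_inner {x y : H} (hx : ‖x‖ ≤ 1) (hy : ‖y‖ ≤ 1)
    {δ : ℝ} (h : 1 - δ ≤ ⟪x, y⟫) : ‖x - y‖ ^ 2 ≤ 2 * δ := by
  rw [norm_sub_sq_real]
  nlinarith [pow_le_one₀ (n := 2) (norm_nonneg x) hx, pow_le_one₀ (n := 2) (norm_nonneg y) hy]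

theorem tendsto_inner_near_maximizers_smallSets {v : H} (hv : v ≠ 0) :
    Tendsto (fun ε : ℝ => {x : H | ‖x‖ ≤ 1 ∧ ‖v‖ - ε ≤ ⟪x, v⟫}) (𝓝[>] 0)
      (𝓝 (‖v‖⁻¹ • v)).smallSets := by
  have hv' : 0 < ‖v‖ := norm_pos_iff.2 hv
  refine Metric.nhds_basis_closedBall.smallSets.tendsto_right_iff.2 fun r hr => ?_
  have hpos : (0 : ℝ) < ‖v‖ * r ^ 2 / 2 := by positivity
  filter_upwards [nhdsWithin_le_nhds (eventually_lt_nhds hpos)] with ε hε x ⟨hx, hxv⟩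
  have hinner : 1 - ε / ‖v‖ ≤ ⟪x, ‖v‖⁻¹ • v⟫ := by
    rw [real_inner_smul_right, ← div_eq_inv_mul, le_div_iff₀ hv', sub_mul,
      div_mul_cancel₀ _ hv'.ne']
    linarith
  have hsq := norm_sub_sq_le_of_one_sub_le_inner hx (norm_smul_inv_norm hv).le hinner
  have hε' : 2 * (ε / ‖v‖) ≤ r ^ 2 := by
    rw [mul_div_assoc', div_le_iff₀ hv']
    linarith
  rw [Metric.mem_closedBall, dist_eq_norm]
  exact (pow_le_pow_iff_left₀ (norm_nonneg _) hr.le two_ne_zero).1 (hsq.trans hε')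

end InnerProductSpace

theorem sup_over_near_maximizers_tendsto_general {H : Type*}
    [NormedAddCommGroup H] [InnerProductSpace ℝ H]
    (v : H) (hv : v ≠ 0) (hmem : ‖(‖v‖⁻¹ • v : H)‖ ≤ 1)
    (g : {f : H // ‖f‖ ≤ 1} → ℝ) (hgc : Continuous g) :
    Tendsto (fun ε : ℝ =>
        sSup (g '' {h : {f : H // ‖f‖ ≤ 1} | ‖v‖ - ε ≤ ⟪h.1, v⟫}))
      (nhdsWithin 0 (Set.Ioi 0)) (nhds (g ⟨‖v‖⁻¹ • v, hmem⟩)) := by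
  set u : {f : H // ‖f‖ ≤ 1} := ⟨‖v‖⁻¹ • v, hmem⟩
  have hsets :
      Tendsto (fun ε : ℝ => {h : {f : H // ‖f‖ ≤ 1} | ‖v‖ - ε ≤ ⟪h.1, v⟫}) (𝓝[>] 0) (𝓝 u).smallSets :=
    Subtype.tendsto_smallSets_nhds <|
      (tendsto_inner_near_maximizers_smallSets hv).smallSets_mono <| .of_forall fun _ => by
        rintro _ ⟨h, hh, rfl⟩
        exact ⟨h.2, hh⟩
  have hu : ⟪u.1, v⟫ = ‖v‖ := by
    rw [real_inner_smul_left, real_inner_self_eq_norm_sq, sq,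
      inv_mul_cancel_left₀ (norm_ne_zero_iff.2 hv)]
  refine tendsto_csSup_of_tendsto_smallSets
    (hgc.continuousAt.tendsto.image_smallSets.comp hsets) ?_
  filter_upwards [self_mem_nhdsWithin] with ε hε
  exact ⟨u, by simp only [Set.mem_ofPred_eq, hu]; linarith [Set.mem_Ioi.1 hε], rfl⟩

/-- for `v ≠ 0` in a Hilbert space with closed unit ball `F`,
`A_ε = {h ∈ F : ⟪h, v⟫ ≥ ‖v‖ − ε}`, and every bounded norm-continuous `g : F → ℝ`,
`lim_{ε↓0} sup_{A_ε} g = g(v/‖v‖)`. -/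
theorem sup_over_near_maximizers_tendsto {H : Type*}
    [NormedAddCommGroup H] [InnerProductSpace ℝ H]
    (v : H) (hv : v ≠ 0) (hmem : ‖(‖v‖⁻¹ • v : H)‖ ≤ 1)
    (g : {f : H // ‖f‖ ≤ 1} → ℝ) (hgc : Continuous g) (hgb : ∃ M : ℝ, ∀ f, |g f| ≤ M) :
    Tendsto (fun ε : ℝ =>
        sSup (g '' {h : {f : H // ‖f‖ ≤ 1} | ‖v‖ - ε ≤ ⟪h.1, v⟫}))
      (nhdsWithin 0 (Set.Ioi 0)) (nhds (g ⟨‖v‖⁻¹ • v, hmem⟩)) :=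
  sup_over_near_maximizers_tendsto_general v hv hmem g hgc
end

section
/- Let H be an RKHS on X with kernel k bounded on the diagonal, and let P be a Borel probability measure on X such that elements of H are measurable. Let X₁,…,Xₙ be i.i.d. with law P and let Pₙ = (1/n)Σ δ_{X_i} be the empirical measure, with empirical mean embedding μ_{Pₙ} = (1/n)Σ k(X_i,·). Then E‖μ_{Pₙ} − μ_P‖_H² = (1/n)(∫ k(x,x) dP(x) − ‖μ_P‖_H²); in particular ‖μ_{Pₙ} − μ_P‖_H → 0 in L² (hence in probability) as n → ∞. -/
open MeasureTheory ProbabilityTheory Filter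
open scoped RealInnerProductSpace

/-! Write `m = ∫ K dPm`; testing `hμ` against every `f` shows `μ = m`. The vectors
`K (Xᵢ) - m` are centred, square integrable (`K` is bounded) and pairwise independent, hence
pairwise orthogonal in `L²(P; H)`. By Pythagoras `E‖∑_{i<n} (K (Xᵢ) - m)‖² = n E‖K (X₀) - m‖²`,
and `E‖K (X₀) - m‖² = ∫ ‖K‖² dPm - ‖m‖²`; dividing by `n²` gives the identity, and the limit
follows. -/

section

variable {Ω X H : Type*} [MeasurableSpace Ω] [MeasurableSpace X]
  [NormedAddCommGroup H] [InnerProductSpace ℝ H]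

theorem MeasureTheory.MemLp.integrable_inner {ν : Measure X} {f g : X → H}
    (hf : MemLp f 2 ν) (hg : MemLp g 2 ν) : Integrable (fun x => ⟪f x, g x⟫) ν :=
  (L2.integrable_inner (hf.toLp f) (hg.toLp g)).congr <| by
    filter_upwards [hf.coeFn_toLp, hg.coeFn_toLp] with x hfx hgx
    rw [hfx, hgx]

theorem Finset.inv_card_smul_sum_sub {ι E : Type*} [AddCommGroup E] [Module ℝ E]
    {s : Finset ι} (hs : s.Nonempty) (v : ι → E) (w : E) :
    (s.card : ℝ)⁻¹ • ∑ i ∈ s, v i - w = (s.card : ℝ)⁻¹ • ∑ i ∈ s, (v i - w) := by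
  have hcard : (s.card : ℝ) ≠ 0 := Nat.cast_ne_zero.mpr hs.card_ne_zero
  rw [Finset.sum_sub_distrib, smul_sub, Finset.sum_const, ← Nat.cast_smul_eq_nsmul ℝ, smul_smul,
    inv_mul_cancel₀ hcard, one_smul]

theorem integral_norm_sum_sq_of_integral_inner_eq_zero {ι : Type*} {P : Measure Ω}
    (s : Finset ι) {Z : ι → Ω → H} (hZ : ∀ i, MemLp (Z i) 2 P)
    (horth : Pairwise fun i j => ∫ ω, ⟪Z i ω, Z j ω⟫ ∂P = 0) :
    ∫ ω, ‖∑ i ∈ s, Z i ω‖ ^ 2 ∂P = ∑ i ∈ s, ∫ ω, ‖Z i ω‖ ^ 2 ∂P := by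
  have hint i j : Integrable (fun ω => ⟪Z i ω, Z j ω⟫) P := (hZ i).integrable_inner (hZ j)
  calc ∫ ω, ‖∑ i ∈ s, Z i ω‖ ^ 2 ∂P
      = ∑ i ∈ s, ∑ j ∈ s, ∫ ω, ⟪Z i ω, Z j ω⟫ ∂P := by
        simp only [← real_inner_self_eq_norm_sq, sum_inner]
        simp only [inner_sum]
        rw [integral_finsetSum _ fun i _ => integrable_finsetSum _ fun j _ => hint i j]
        exact Finset.sum_congr rfl fun i _ => integral_finsetSum _ fun j _ => hint i j
    _ = ∑ i ∈ s, ∫ ω, ⟪Z i ω, Z i ω⟫ ∂P :=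
        Finset.sum_congr rfl fun i hi =>
          Finset.sum_eq_single_of_mem i hi fun j _ hji => horth hji.symm
    _ = ∑ i ∈ s, ∫ ω, ‖Z i ω‖ ^ 2 ∂P := by simp only [real_inner_self_eq_norm_sq]

theorem ProbabilityTheory.IndepFun.integral_inner_comp_comp [CompleteSpace H] {P : Measure Ω}
    {Y₁ Y₂ : Ω → X} (hY : IndepFun Y₁ Y₂ P) (hY₁ : AEMeasurable Y₁ P) (hY₂ : AEMeasurable Y₂ P)
    {f g : X → H} (hf : Integrable f (P.map Y₁)) (hg : Integrable g (P.map Y₂)) :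
    ∫ ω, ⟪f (Y₁ ω), g (Y₂ ω)⟫ ∂P = ⟪∫ ω, f (Y₁ ω) ∂P, ∫ ω, g (Y₂ ω) ∂P⟫ :=
  hY.integral_bilin_comp_comp hY₁ hY₂ hf hg (innerSL ℝ)

theorem eq_integral_of_forall_integral_inner_eq [CompleteSpace H] {ν : Measure X} {f : X → H}
    (hf : Integrable f ν) {m : H} (hm : ∀ a, ∫ x, ⟪a, f x⟫ ∂ν = ⟪a, m⟫) : m = ∫ x, f x ∂ν :=
  ext_inner_left ℝ fun a => by rw [← hm a, integral_inner hf]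

theorem integral_norm_sub_integral_sq [CompleteSpace H] {ν : Measure X} [IsProbabilityMeasure ν]
    {f : X → H} (hf : MemLp f 2 ν) :
    ∫ x, ‖f x - ∫ y, f y ∂ν‖ ^ 2 ∂ν = ∫ x, ‖f x‖ ^ 2 ∂ν - ‖∫ x, f x ∂ν‖ ^ 2 := by
  set m := ∫ y, f y ∂ν
  have hf1 : Integrable f ν := hf.integrable one_le_two
  have hsq : Integrable (fun x => ‖f x‖ ^ 2) ν := hf.integrable_norm_pow two_ne_zero
  have hinner : Integrable (fun x => 2 * ⟪m, f x⟫) ν := (hf1.const_inner m).const_mul 2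
  have hexpand x : ‖f x - m‖ ^ 2 = ‖f x‖ ^ 2 - 2 * ⟪m, f x⟫ + ‖m‖ ^ 2 := by
    rw [norm_sub_sq_real, real_inner_comm]
  simp only [hexpand]
  rw [integral_add (f := fun x => ‖f x‖ ^ 2 - 2 * ⟪m, f x⟫) (hsq.sub hinner) (integrable_const _),
    integral_sub hsq hinner,
    integral_const_mul, integral_inner hf1, real_inner_self_eq_norm_sq]
  simp only [integral_const, probReal_univ, smul_eq_mul, one_mul]
  ring

theorem integral_comp_of_map_eq {E : Type*} [NormedAddCommGroup E] [NormedSpace ℝ E]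
    {P : Measure Ω} {Y : Ω → X} {ν : Measure X} (hY : AEMeasurable Y P) (hlaw : P.map Y = ν)
    {g : X → E} (hg : AEStronglyMeasurable g ν) : ∫ ω, g (Y ω) ∂P = ∫ x, g x ∂ν := by
  subst hlaw
  exact (integral_map hY hg).symm

theorem integral_norm_sampleMean_sub_integral_sq [CompleteSpace H] {ι : Type*} {Pm : Measure X}
    [IsProbabilityMeasure Pm] {K : X → H} (hK : MemLp K 2 Pm) {P : Measure Ω} {Xs : ι → Ω → X}
    (hXs : ∀ i, AEMeasurable (Xs i) P) (hindep : Pairwise fun i j => IndepFun (Xs i) (Xs j) P)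
    (hlaw : ∀ i, P.map (Xs i) = Pm) {s : Finset ι} (hs : s.Nonempty) :
    ∫ ω, ‖(s.card : ℝ)⁻¹ • ∑ i ∈ s, K (Xs i ω) - ∫ x, K x ∂Pm‖ ^ 2 ∂P =
      (1 / s.card) * (∫ x, ‖K x‖ ^ 2 ∂Pm - ‖∫ x, K x ∂Pm‖ ^ 2) := by
  set m := ∫ x, K x ∂Pm
  have hKm : MemLp (fun x => K x - m) 2 Pm := hK.sub (memLp_const m)
  have hZ i : MemLp (fun ω => K (Xs i ω) - m) 2 P := by
    rw [← hlaw i] at hKm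
    exact hKm.comp_of_map (hXs i)
  have hmean i : ∫ ω, (K (Xs i ω) - m) ∂P = 0 := by
    rw [integral_comp_of_map_eq (hXs i) (hlaw i) hKm.aestronglyMeasurable,
      integral_sub (hK.integrable one_le_two) (integrable_const m)]
    simp [m]
  have horth : Pairwise fun i j =>  ∫ ω, ⟪K (Xs i ω) - m, K (Xs j ω) - m⟫ ∂P = 0 := by
    intro i j hij
    have hint : Integrable (fun x => K x - m) Pm := hKm.integrable one_le_two
    rw [(hindep hij).integral_inner_comp_comp (f := fun x => K x - m) (g := fun x => K x - m)
      (hXs i) (hXs j) (hlaw i ▸ hint) (hlaw j ▸ hint), hmean i, inner_zero_left]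
  have hvar i : ∫ ω, ‖K (Xs i ω) - m‖ ^ 2 ∂P = ∫ x, ‖K x‖ ^ 2 ∂Pm - ‖m‖ ^ 2 := by
    rw [← integral_norm_sub_integral_sq hK]
    exact integral_comp_of_map_eq (hXs i) (hlaw i) (hKm.aestronglyMeasurable.norm.pow 2)
  calc ∫ ω, ‖(s.card : ℝ)⁻¹ • ∑ i ∈ s, K (Xs i ω) - m‖ ^ 2 ∂P
      = ∫ ω, ((s.card : ℝ)⁻¹) ^ 2 * ‖∑ i ∈ s, (K (Xs i ω) - m)‖ ^ 2 ∂P := by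
        simp only [Finset.inv_card_smul_sum_sub hs, norm_smul, mul_pow, norm_inv,
          RCLike.norm_natCast]
    _ = ((s.card : ℝ)⁻¹) ^ 2 * ∑ i ∈ s, ∫ ω, ‖K (Xs i ω) - m‖ ^ 2 ∂P := by
        rw [integral_const_mul, integral_norm_sum_sq_of_integral_inner_eq_zero s hZ horth]
    _ = (1 / s.card) * (∫ x, ‖K x‖ ^ 2 ∂Pm - ‖m‖ ^ 2) := by
        simp only [hvar, Finset.sum_const, nsmul_eq_mul]
        field_simp

end

theorem empirical_mean_embedding_L2_general {X H Ω : Type*} [MeasurableSpace X] [MeasurableSpace Ω]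
    [NormedAddCommGroup H] [InnerProductSpace ℝ H] [CompleteSpace H]
    [MeasurableSpace H] [BorelSpace H] [SecondCountableTopology H]
    (K : X → H) (hKm : Measurable K)
    (Pm : Measure X) [IsProbabilityMeasure Pm]
    (P : Measure Ω)
    (Xs : ℕ → Ω → X) (hXm : ∀ i, Measurable (Xs i))
    (hindep : iIndepFun Xs P)
    (hlaw : ∀ i, Measure.map (Xs i) P = Pm)
    (hbdd : ∃ C : ℝ, ∀ x, ⟪K x, K x⟫ ≤ C)
    (μ : H) (hμ : ∀ f : H, ∫ x, ⟪f, K x⟫ ∂Pm = ⟪f, μ⟫) :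
    (∀ n : ℕ, 0 < n →
      ∫ ω, ‖(n : ℝ)⁻¹ • (∑ i ∈ Finset.range n, K (Xs i ω)) - μ‖ ^ 2 ∂P =
        (1 / n) * ((∫ x, ⟪K x, K x⟫ ∂Pm) - ‖μ‖ ^ 2)) ∧
    Tendsto (fun n : ℕ => ∫ ω, ‖(n : ℝ)⁻¹ • (∑ i ∈ Finset.range n, K (Xs i ω)) - μ‖ ^ 2 ∂P)
      atTop (nhds 0) := by
  obtain ⟨C, hC⟩ := hbdd
  have hK : MemLp K 2 Pm := MemLp.of_bound hKm.aestronglyMeasurable (√C) <| ae_of_all _ fun x =>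
    Real.le_sqrt_of_sq_le ((real_inner_self_eq_norm_sq (K x)) ▸ hC x)
  have hμK : μ = ∫ x, K x ∂Pm :=
    eq_integral_of_forall_integral_inner_eq (hK.integrable one_le_two) hμ
  have hformula (n : ℕ) (hn : 0 < n) :
      ∫ ω, ‖(n : ℝ)⁻¹ • (∑ i ∈ Finset.range n, K (Xs i ω)) - μ‖ ^ 2 ∂P =
        (1 / n) * ((∫ x, ⟪K x, K x⟫ ∂Pm) - ‖μ‖ ^ 2) := by
    simpa [hμK, real_inner_self_eq_norm_sq] using
      integral_norm_sampleMean_sub_integral_sq hK (fun i => (hXm i).aemeasurable)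
        (fun i j hij => hindep.indepFun hij) hlaw (s := Finset.range n) (by simpa using hn.ne')
  refine ⟨hformula, ?_⟩
  have hlim : Tendsto (fun n : ℕ => (1 / (n : ℝ)) * ((∫ x, ⟪K x, K x⟫ ∂Pm) - ‖μ‖ ^ 2))
      atTop (nhds 0) := by
    simpa using tendsto_one_div_atTop_nhds_zero_nat.mul_const ((∫ x, ⟪K x, K x⟫ ∂Pm) - ‖μ‖ ^ 2)
  refine hlim.congr' ?_
  filter_upwards [eventually_gt_atTop 0] with n hn
  exact (hformula n hn).symm

/-- for an i.i.d. sample `X₁, X₂, …` with law `Pm` on `X`, a kernel bounded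
on the diagonal (feature-map model: `k x y = ⟪K x, K y⟫`), and the mean embedding `μ` of
`Pm`, the empirical mean embedding `μ_{Pₙ} = (1/n) Σ_{i<n} K(X_i)` satisfies
`E‖μ_{Pₙ} − μ‖² = (1/n)(∫ k(x,x) dPm − ‖μ‖²)`; in particular `‖μ_{Pₙ} − μ‖ → 0` in `L²`
as `n → ∞`. -/
theorem empirical_mean_embedding_L2 {X H Ω : Type*} [MeasurableSpace X] [MeasurableSpace Ω]
    [NormedAddCommGroup H] [InnerProductSpace ℝ H] [CompleteSpace H]
    [MeasurableSpace H] [BorelSpace H] [SecondCountableTopology H]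
    (K : X → H) (hKm : Measurable K)
    (Pm : Measure X) [IsProbabilityMeasure Pm]
    (P : Measure Ω) [IsProbabilityMeasure P]
    (Xs : ℕ → Ω → X) (hXm : ∀ i, Measurable (Xs i))
    (hindep : iIndepFun Xs P)
    (hlaw : ∀ i, Measure.map (Xs i) P = Pm)
    (hbdd : ∃ C : ℝ, ∀ x, ⟪K x, K x⟫ ≤ C)
    (μ : H) (hμ : ∀ f : H, ∫ x, ⟪f, K x⟫ ∂Pm = ⟪f, μ⟫) :
    (∀ n : ℕ, 0 < n →
      ∫ ω, ‖(n : ℝ)⁻¹ • (∑ i ∈ Finset.range n, K (Xs i ω)) - μ‖ ^ 2 ∂P =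
        (1 / n) * ((∫ x, ⟪K x, K x⟫ ∂Pm) - ‖μ‖ ^ 2)) ∧
    Tendsto (fun n : ℕ => ∫ ω, ‖(n : ℝ)⁻¹ • (∑ i ∈ Finset.range n, K (Xs i ω)) - μ‖ ^ 2 ∂P)
      atTop (nhds 0) :=
  empirical_mean_embedding_L2_general K hKm Pm P Xs hXm hindep hlaw hbdd μ hμ
end
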